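/- Let p ≥ 1 and q > 0. The identity map from persistence diagrams with the p-Wasserstein distance to persistence diagrams with the distance π_q is continuous: for every ε > 0 there exists δ > 0 such that W_p(X,Y) < δ implies π_q(X,Y) < ε for all persistence diagrams X, Y. -/

import Mathlib

open scoped ENNReal Classical

/-- A persistence diagram: a finite multiset of points strictly above the diagonal of `ℝ²`.
Distances in `ℝ × ℝ` are measured by the product (sup-norm, i.e. `p = ∞`) metric `dist`. -/
structure PD where
  pts : Multiset (ℝ × ℝ)
  birth_lt_death : ∀ x ∈ pts, x.1 < x.2

/-- Orthogonal projection of a point onto the diagonal `Δ = {(t, t) : t ∈ ℝ}`. -/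
noncomputable def diagProj (x : ℝ × ℝ) : ℝ × ℝ := ((x.1 + x.2) / 2, (x.1 + x.2) / 2)

/-- The distance of a matched pair: a pair of two diagonal points counts as distance `0`,
otherwise the distance in `ℝ × ℝ` is used. -/
noncomputable def pairCost (u v : ℝ × ℝ) : ℝ :=
  if u.1 = u.2 ∧ v.1 = v.2 then 0 else dist u v

/-- `P` encodes a matching, i.e. a bijection `η : X₀ ⊔ Y₀' → Y₀ ⊔ X₀'`, as the multiset of
matched pairs `(u, η u)`: its first marginal is `X₀ ⊔ Y₀'` and its second is `Y₀ ⊔ X₀'`. -/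
def IsMatching (X Y : PD) (P : Multiset ((ℝ × ℝ) × (ℝ × ℝ))) : Prop :=
  P.map Prod.fst = X.pts + Y.pts.map diagProj ∧
  P.map Prod.snd = Y.pts + X.pts.map diagProj

/-- The bottleneck profile `D_{X,Y}(t) = inf_η |{u : d(u, η u) > t}|`. -/
noncomputable def bprofile (X Y : PD) (t : ℝ) : ℝ≥0∞ :=
  ⨅ P : {P : Multiset ((ℝ × ℝ) × (ℝ × ℝ)) // IsMatching X Y P},
    ((Multiset.countP (fun uv => t < pairCost uv.1 uv.2) P.1 : ℕ) : ℝ≥0∞)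

/-- The `f`-Prokhorov distance `π_f(X,Y) = inf {t > 0 : D_{X,Y}(t) < f(t)}`
(with value `∞` if no such `t` exists). -/
noncomputable def prokhorov (f : ℝ → ℝ) (X Y : PD) : ℝ≥0∞ :=
  ⨅ t : {t : ℝ // 0 < t ∧ bprofile X Y t < ENNReal.ofReal (f t)}, ENNReal.ofReal t.1

/-- The `p`-Wasserstein distance `W_p(X,Y) = inf_η (Σ_u d(u, η u)^p)^(1/p)`. -/
noncomputable def wassersteinDist (p : ℝ) (X Y : PD) : ℝ :=
  sInf {r : ℝ | ∃ P, IsMatching X Y P ∧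
    r = ((P.map fun uv => pairCost uv.1 uv.2 ^ p).sum) ^ (1 / p)}

/-! Markov's inequality for matchings: if `W_p(X,Y) < δ`, some matching has
`Σ_u d(u, η u)^p < δ^p`, so fewer than `δ^p / t^p` of its pairs are longer than `t`, i.e.
`D_{X,Y}(t) < δ^p / t^p`. With `t = ε/2` and `δ = t^((p+q)/p)` this bound is `t^q`, so `t` is
admissible in the infimum defining `π_q(X,Y)` and `π_q(X,Y) ≤ ε/2 < ε`. -/

lemma Multiset.countP_mul_le_sum_map {α : Type*} {s : Multiset α} {f : α → ℝ} {r : α → Prop}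
    [DecidablePred r] {c : ℝ} (hf : ∀ a ∈ s, 0 ≤ f a) (hc : ∀ a ∈ s, r a → c ≤ f a) :
    (s.countP r : ℝ) * c ≤ (s.map f).sum := by
  have hfilter : ((s.filter r).card : ℝ) * c ≤ ((s.filter r).map f).sum := by
    rw [← nsmul_eq_mul, ← Multiset.card_map f]
    refine Multiset.card_nsmul_le_sum fun x hx => ?_
    obtain ⟨a, ha, rfl⟩ := Multiset.mem_map.1 hx
    exact hc a (Multiset.mem_of_mem_filter ha) (Multiset.of_mem_filter ha)
  have hrest : 0 ≤ ((s.filter (¬ r ·)).map f).sum :=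
    Multiset.sum_nonneg fun x hx => by
      obtain ⟨a, ha, rfl⟩ := Multiset.mem_map.1 hx
      exact hf a (Multiset.mem_of_mem_filter ha)
  calc (s.countP r : ℝ) * c ≤ ((s.filter r).map f).sum := by
        rwa [Multiset.countP_eq_card_filter]
    _ ≤ ((s.filter r).map f).sum + ((s.filter (¬ r ·)).map f).sum := le_add_of_nonneg_right hrest
    _ = (s.map f).sum := by
        rw [← Multiset.sum_add, ← Multiset.map_add, Multiset.filter_add_not]

lemma pairCost_nonneg (u v : ℝ × ℝ) : 0 ≤ pairCost u v := by
  unfold pairCost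
  split
  · rfl
  · exact dist_nonneg

lemma isMatching_toDiagonal (X Y : PD) :
    IsMatching X Y
      (X.pts.map (fun x => (x, diagProj x)) + Y.pts.map (fun y => (diagProj y, y))) := by
  constructor <;> simp [Multiset.map_map, add_comm]

noncomputable def powCost (p : ℝ) (P : Multiset ((ℝ × ℝ) × (ℝ × ℝ))) : ℝ :=
  (P.map fun uv => pairCost uv.1 uv.2 ^ p).sum

lemma powCost_nonneg (p : ℝ) (P : Multiset ((ℝ × ℝ) × (ℝ × ℝ))) : 0 ≤ powCost p P :=
  Multiset.sum_nonneg fun _ hx => by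
    obtain ⟨uv, _, rfl⟩ := Multiset.mem_map.1 hx
    exact Real.rpow_nonneg (pairCost_nonneg _ _) _

lemma wassersteinDist_eq_sInf_powCost (p : ℝ) (X Y : PD) :
    wassersteinDist p X Y = sInf {r : ℝ | ∃ P, IsMatching X Y P ∧ r = powCost p P ^ (1 / p)} :=
  rfl

lemma exists_isMatching_powCost_lt {p δ : ℝ} {X Y : PD} (hp : 0 < p)
    (h : wassersteinDist p X Y < δ) : ∃ P, IsMatching X Y P ∧ powCost p P < δ ^ p := by
  rw [wassersteinDist_eq_sInf_powCost] at h
  have hbdd : BddBelow {r : ℝ | ∃ P, IsMatching X Y P ∧ r = powCost p P ^ (1 / p)} :=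
    ⟨0, by rintro r ⟨P, -, rfl⟩; exact Real.rpow_nonneg (powCost_nonneg p P) _⟩
  obtain ⟨_, ⟨P, hP, rfl⟩, hlt⟩ :=
    (csInf_lt_iff hbdd ⟨_, _, isMatching_toDiagonal X Y, rfl⟩).1 h
  refine ⟨P, hP, ?_⟩
  have hpow := Real.rpow_lt_rpow (Real.rpow_nonneg (powCost_nonneg p P) _) hlt hp
  rwa [← Real.rpow_mul (powCost_nonneg p P), one_div_mul_cancel hp.ne', Real.rpow_one] at hpow

lemma countP_mul_rpow_le_powCost {p t : ℝ} (hp : 0 ≤ p) (ht : 0 ≤ t)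
    (P : Multiset ((ℝ × ℝ) × (ℝ × ℝ))) :
    (P.countP (fun uv => t < pairCost uv.1 uv.2) : ℝ) * t ^ p ≤ powCost p P :=
  Multiset.countP_mul_le_sum_map (fun _ _ => Real.rpow_nonneg (pairCost_nonneg _ _) _)
    fun _ _ hlt => Real.rpow_le_rpow ht hlt.le hp

lemma bprofile_lt_of_wassersteinDist_lt {p t δ : ℝ} {X Y : PD} (hp : 0 < p) (ht : 0 < t)
    (h : wassersteinDist p X Y < δ) : bprofile X Y t < ENNReal.ofReal (δ ^ p / t ^ p) := by
  obtain ⟨P, hP, hcost⟩ := exists_isMatching_powCost_lt hp h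
  have htp : 0 < t ^ p := Real.rpow_pos_of_pos ht p
  have hcount : (P.countP (fun uv => t < pairCost uv.1 uv.2) : ℝ) < δ ^ p / t ^ p := by
    rw [lt_div_iff₀ htp]
    exact (countP_mul_rpow_le_powCost hp.le ht.le P).trans_lt hcost
  calc bprofile X Y t ≤ (P.countP (fun uv => t < pairCost uv.1 uv.2) : ℝ≥0∞) :=
        iInf_le_of_le ⟨P, hP⟩ le_rfl
    _ < ENNReal.ofReal (δ ^ p / t ^ p) := by
        rw [← ENNReal.ofReal_natCast]
        exact (ENNReal.ofReal_lt_ofReal_iff ((Nat.cast_nonneg _).trans_lt hcount)).2 hcount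

lemma prokhorov_le_of_bprofile_lt {f : ℝ → ℝ} {X Y : PD} {t : ℝ} (ht : 0 < t)
    (h : bprofile X Y t < ENNReal.ofReal (f t)) : prokhorov f X Y ≤ ENNReal.ofReal t :=
  iInf_le_of_le ⟨t, ht, h⟩ le_rfl

theorem id_wasserstein_to_prokhorov_continuous_general (p q : ℝ) (hp : 1 ≤ p) :
    ∀ ε : ℝ, 0 < ε → ∃ δ : ℝ, 0 < δ ∧ ∀ X Y : PD,
      wassersteinDist p X Y < δ →
      prokhorov (fun t => t ^ q) X Y < ENNReal.ofReal ε := by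
  intro ε hε
  have hp0 : 0 < p := one_pos.trans_le hp
  have ht : 0 < ε / 2 := half_pos hε
  have hδ : ((ε / 2) ^ ((p + q) / p)) ^ p / (ε / 2) ^ p = (ε / 2) ^ q := by
    rw [← Real.rpow_mul ht.le, div_mul_cancel₀ _ hp0.ne', Real.rpow_add ht,
      mul_div_cancel_left₀ _ (Real.rpow_pos_of_pos ht p).ne']
  refine ⟨(ε / 2) ^ ((p + q) / p), Real.rpow_pos_of_pos ht _, fun X Y hW => ?_⟩
  have hprofile := bprofile_lt_of_wassersteinDist_lt hp0 ht hW
  rw [hδ] at hprofile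
  calc prokhorov (fun t => t ^ q) X Y ≤ ENNReal.ofReal (ε / 2) :=
        prokhorov_le_of_bprofile_lt ht hprofile
    _ < ENNReal.ofReal ε := (ENNReal.ofReal_lt_ofReal_iff hε).2 (half_lt_self hε)

/-- For `p ≥ 1` and `q > 0`, the identity map from persistence diagrams with the
`p`-Wasserstein distance to persistence diagrams with `π_q = π_{t ↦ t^q}` is (uniformly)
continuous: for every `ε > 0` there is `δ > 0` such that `W_p(X,Y) < δ` implies
`π_q(X,Y) < ε`. -/
theorem id_wasserstein_to_prokhorov_continuous (p q : ℝ) (hp : 1 ≤ p) (hq : 0 < q) :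
    ∀ ε : ℝ, 0 < ε → ∃ δ : ℝ, 0 < δ ∧ ∀ X Y : PD,
      wassersteinDist p X Y < δ →
      prokhorov (fun t => t ^ q) X Y < ENNReal.ofReal ε :=
  id_wasserstein_to_prokhorov_continuous_general p q hp
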